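/- For every positive integer n there is no nonzero complex matrix M, indexed by functions Fin n → Fin d × Fin d, such that M is positive semidefinite, its partial transpose M^Γ is positive semidefinite, and trace(M · (I − Φ)^{⊗n}) = 0, where (I − Φ)^{⊗n} is the n-fold tensor power of I − Φ. -/

import Mathlib

open Matrix Kronecker ComplexOrder

/-- Projector onto the maximally entangled state: Φ[(i,j),(k,l)] = 1/d if i=j and k=l. -/
noncomputable def Phi (d : ℕ) : Matrix (Fin d × Fin d) (Fin d × Fin d) ℂ :=
  fun p q => if p.1 = p.2 ∧ q.1 = q.2 then ((d : ℂ))⁻¹ else 0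

/-- Sitewise partial transpose on n pairs of systems:
M^Γ[(p,q),(r,s)] = M[(p,s),(r,q)], identifying x : Fin n → Fin d × Fin d with (x₁, x₂). -/
def ptransN (d n : ℕ) (M : Matrix (Fin n → Fin d × Fin d) (Fin n → Fin d × Fin d) ℂ) :
    Matrix (Fin n → Fin d × Fin d) (Fin n → Fin d × Fin d) ℂ :=
  fun x y => M (fun t => ((x t).1, (y t).2)) (fun t => ((y t).1, (x t).2))

/-- The n-fold tensor power of I − Φ. -/
noncomputable def IsubPhiPow (d n : ℕ) :
    Matrix (Fin n → Fin d × Fin d) (Fin n → Fin d × Fin d) ℂ :=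
  fun x y => ∏ t : Fin n, ((1 : Matrix (Fin d × Fin d) (Fin d × Fin d) ℂ) - Phi d) (x t) (y t)

/-!
The partial transpose of `I - Φ` is `I - F/d = (1 - 1/d) I + (1/d) (I - F)`, where `F` is the
swap of the two factors; `I - F ≥ 0` because `F` is a Hermitian involution. Tensor products are
monotone in the Loewner order, so `((I - Φ)^{⊗n})^Γ ≥ (1 - 1/d)^n I`. Partial transposition
preserves `tr (A B)`, hence
`0 = tr (M (I - Φ)^{⊗n}) = tr (M^Γ ((I - Φ)^{⊗n})^Γ) ≥ (1 - 1/d)^n tr M^Γ ≥ 0`,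
which forces the positive semidefinite matrix `M^Γ`, and with it `M`, to vanish.
-/

open Finset

namespace Matrix

section PiTensor

variable {ι κ R : Type*} [Fintype ι]

def piTensor [CommMonoid R] (A : ι → Matrix κ κ R) : Matrix (ι → κ) (ι → κ) R :=
  of fun x y => ∏ t, A t (x t) (y t)

theorem piTensor_add [CommSemiring R] [DecidableEq ι] (A B : ι → Matrix κ κ R) :
    piTensor (A + B) = ∑ S ∈ univ.powerset, piTensor fun t => if t ∈ S then A t else B t := by
  ext x y
  simp only [piTensor, of_apply, sum_apply, Pi.add_apply, add_apply, prod_add]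
  refine sum_congr rfl fun S _ => ?_
  rw [← prod_mul_prod_compl S, compl_eq_univ_sdiff]
  congr 1 <;> refine prod_congr rfl fun t ht => ?_
  · rw [if_pos ht]
  · rw [if_neg (mem_sdiff.mp ht).2]

theorem piTensor_smul_one [CommSemiring R] [DecidableEq κ] [Fintype κ] (c : R) :
    piTensor (fun _ : ι => c • (1 : Matrix κ κ R)) = c ^ Fintype.card ι • 1 := by
  ext x y
  simp only [piTensor, of_apply, smul_apply, one_apply, smul_eq_mul, prod_mul_distrib,
    prod_const, card_univ, prod_boole]
  simp [funext_iff]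

variable {𝕜 : Type*} [RCLike 𝕜] [Fintype κ]

open MatrixOrder in
theorem PosSemidef.piTensor {A : ι → Matrix κ κ 𝕜} (hA : ∀ t, (A t).PosSemidef) :
    (piTensor A).PosSemidef := by
  classical
  choose C hC using fun t => CStarAlgebra.nonneg_iff_eq_star_mul_self.mp (hA t).nonneg
  have hfactor : Matrix.piTensor A = (Matrix.piTensor C)ᴴ * Matrix.piTensor C := by
    ext x y
    simp only [Matrix.piTensor, hC, of_apply, mul_apply, conjTranspose_apply,
      star_eq_conjTranspose]
    rw [prod_univ_sum, Fintype.piFinset_univ]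
    simp [star_prod, prod_mul_distrib]
  rw [hfactor]
  exact posSemidef_conjTranspose_mul_self _

theorem PosSemidef.piTensor_sub_piTensor {A B : ι → Matrix κ κ 𝕜}
    (hB : ∀ t, (B t).PosSemidef) (hAB : ∀ t, (A t - B t).PosSemidef) :
    (Matrix.piTensor A - Matrix.piTensor B).PosSemidef := by
  classical
  have hsplit := piTensor_add B (A - B)
  rw [add_sub_cancel, ← add_sum_erase _ _ (mem_powerset_self _)] at hsplit
  simp only [mem_univ, if_true] at hsplit
  rw [hsplit, add_sub_cancel_left]
  refine posSemidef_sum _ fun S _ => PosSemidef.piTensor fun t => ?_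
  split_ifs
  exacts [hB t, hAB t]

end PiTensor

section Trace

variable {m 𝕜 : Type*} [Fintype m] [DecidableEq m] [RCLike 𝕜]

open MatrixOrder in
theorem PosSemidef.trace_mul_nonneg {A B : Matrix m m 𝕜} (hA : A.PosSemidef)
    (hB : B.PosSemidef) : 0 ≤ (A * B).trace := by
  obtain ⟨C, rfl⟩ := CStarAlgebra.nonneg_iff_eq_star_mul_self.mp hB.nonneg
  rw [← mul_assoc, trace_mul_cycle, star_eq_conjTranspose]
  exact (hA.mul_mul_conjTranspose_same C).trace_nonneg

theorem PosSemidef.eq_zero_of_trace_mul_eq_zero {A B : Matrix m m 𝕜} {c : 𝕜}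
    (hA : A.PosSemidef) (hB : (B - c • 1).PosSemidef) (hc : 0 < c) (h : (A * B).trace = 0) :
    A = 0 := by
  have hsplit : (A * B).trace = (A * (B - c • 1)).trace + c * A.trace := by
    rw [mul_sub, trace_sub, Matrix.mul_smul, mul_one, trace_smul, smul_eq_mul, sub_add_cancel]
  rw [hsplit] at h
  have htr := (add_eq_zero_iff_of_nonneg (hA.trace_mul_nonneg hB)
    (mul_nonneg hc.le hA.trace_nonneg)).mp h
  exact hA.trace_eq_zero_iff.mp ((mul_eq_zero.mp htr.2).resolve_left hc.ne')

theorem posSemidef_one_sub_of_mul_self_eq_one {U : Matrix m m 𝕜} (hU : U.IsHermitian)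
    (hUU : U * U = 1) : (1 - U).PosSemidef := by
  have hsq : 1 - U = (2⁻¹ : ℝ) • ((1 - U)ᴴ * (1 - U)) := by
    rw [conjTranspose_sub, conjTranspose_one, hU.eq, sub_mul, mul_sub, mul_sub, hUU]
    simp only [one_mul, mul_one]
    module
  rw [hsq]
  exact (posSemidef_conjTranspose_mul_self _).smul (by norm_num)

end Trace

section Swap

variable {α 𝕜 : Type*} [DecidableEq α] [RCLike 𝕜]

theorem isHermitian_permMatrix_prodComm :
    (Equiv.Perm.permMatrix 𝕜 (Equiv.prodComm α α)).IsHermitian := by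
  rw [IsHermitian, conjTranspose_permMatrix, Equiv.Perm.inv_def, Equiv.prodComm_symm]

theorem permMatrix_prodComm_mul_self [Fintype α] :
    Equiv.Perm.permMatrix 𝕜 (Equiv.prodComm α α) * Equiv.Perm.permMatrix 𝕜 (Equiv.prodComm α α)
      = 1 := by
  rw [← permMatrix_mul, show Equiv.prodComm α α * Equiv.prodComm α α = 1 from rfl,
    permMatrix_one]

end Swap

def partialTranspose {α β R : Type*} (A : Matrix (α × β) (α × β) R) :
    Matrix (α × β) (α × β) R :=
  of fun a b => A (a.1, b.2) (b.1, a.2)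

end Matrix

theorem partialTranspose_one_sub_Phi (d : ℕ) :
    partialTranspose (1 - Phi d)
      = 1 - (d : ℂ)⁻¹ • Equiv.Perm.permMatrix ℂ (Equiv.prodComm (Fin d) (Fin d)) := by
  ext ⟨a1, a2⟩ ⟨b1, b2⟩
  simp only [partialTranspose, Matrix.sub_apply, one_apply, Prod.mk.injEq, Phi, of_apply,
    Matrix.smul_apply, PEquiv.toMatrix_apply, Equiv.toPEquiv_apply, Equiv.prodComm_apply,
    Prod.swap_prod_mk, Option.mem_def, Option.some.injEq, smul_eq_mul, mul_ite, mul_one,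
    mul_zero]
  grind

theorem posSemidef_partialTranspose_one_sub_Phi_sub (d : ℕ) :
    (partialTranspose (1 - Phi d) - (1 - (d : ℂ)⁻¹) • 1).PosSemidef := by
  have hdecomp : partialTranspose (1 - Phi d) - (1 - (d : ℂ)⁻¹) • 1
      = (d : ℂ)⁻¹ • (1 - Equiv.Perm.permMatrix ℂ (Equiv.prodComm (Fin d) (Fin d))) := by
    rw [partialTranspose_one_sub_Phi]
    module
  rw [hdecomp]
  exact (posSemidef_one_sub_of_mul_self_eq_one isHermitian_permMatrix_prodComm
    permMatrix_prodComm_mul_self).smul (by positivity)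

theorem IsubPhiPow_eq_piTensor (d n : ℕ) : IsubPhiPow d n = piTensor fun _ => 1 - Phi d := rfl

theorem ptransN_piTensor (d n : ℕ) (A : Fin n → Matrix (Fin d × Fin d) (Fin d × Fin d) ℂ) :
    ptransN d n (piTensor A) = piTensor fun t => partialTranspose (A t) := rfl

theorem ptransN_ptransN (d n : ℕ)
    (M : Matrix (Fin n → Fin d × Fin d) (Fin n → Fin d × Fin d) ℂ) :
    ptransN d n (ptransN d n M) = M := rfl

theorem trace_ptransN_mul_ptransN (d n : ℕ)
    (M N : Matrix (Fin n → Fin d × Fin d) (Fin n → Fin d × Fin d) ℂ) :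
    (ptransN d n M * ptransN d n N).trace = (M * N).trace := by
  have hinv : Function.Involutive fun p : (Fin n → Fin d × Fin d) × (Fin n → Fin d × Fin d) =>
      ((fun t => ((p.1 t).1, (p.2 t).2)), (fun t => ((p.2 t).1, (p.1 t).2))) := fun _ => rfl
  simp only [trace, diag_apply, mul_apply, ← Fintype.sum_prod_type']
  exact Fintype.sum_equiv (hinv.toPerm _) _ _ fun _ => rfl

theorem stmt_2 (d n : ℕ) (hd : 2 ≤ d) :
    ¬ ∃ M : Matrix (Fin n → Fin d × Fin d) (Fin n → Fin d × Fin d) ℂ,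
      M ≠ 0 ∧ M.PosSemidef ∧ (ptransN d n M).PosSemidef ∧
        (M * IsubPhiPow d n).trace = 0 := by
  rintro ⟨M, hM, -, hMΓ, htr⟩
  have hc : (0 : ℂ) < 1 - (d : ℂ)⁻¹ := by
    have : (0 : ℝ) < 1 - (d : ℝ)⁻¹ := sub_pos.mpr (inv_lt_one_of_one_lt₀ (by exact_mod_cast hd))
    simpa using Complex.zero_lt_real.mpr this
  have hbound : (ptransN d n (IsubPhiPow d n) - (1 - (d : ℂ)⁻¹) ^ n • 1).PosSemidef := by
    have hpow := piTensor_smul_one (ι := Fin n) (κ := Fin d × Fin d) (1 - (d : ℂ)⁻¹)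
    rw [Fintype.card_fin] at hpow
    rw [IsubPhiPow_eq_piTensor, ptransN_piTensor, ← hpow]
    exact .piTensor_sub_piTensor (fun _ => .smul .one hc.le)
      fun _ => posSemidef_partialTranspose_one_sub_Phi_sub d
  have hMΓ_zero : ptransN d n M = 0 := hMΓ.eq_zero_of_trace_mul_eq_zero hbound (pow_pos hc n)
    (by rwa [trace_ptransN_mul_ptransN])
  exact hM (by rw [← ptransN_ptransN d n M, hMΓ_zero]; rfl)
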